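/- Let 0 < ε < 1/9 and let p, q, q' ∈ ℝ² with q ≠ p and q' ≠ p. Suppose that the angle between q − p and q' − p is at most √ε/4, and that ‖p − q'‖ ≥ (1/3)·‖p − q‖. Then Â(p,q) ⊆ Ã(p,q'). -/

import Mathlib

/-- The segment `A(p,q)` of length `(√ε/16)·‖q-p‖` on the line `pq`, with one endpoint
at `p`, emanating away from `q`. -/
def Aseg (ε : ℝ) (p q : EuclideanSpace ℝ (Fin 2)) : Set (EuclideanSpace ℝ (Fin 2)) :=
  {x | ∃ t : ℝ, 0 ≤ t ∧ t ≤ Real.sqrt ε / 16 * ‖q - p‖ ∧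
    x = p - (t / ‖q - p‖) • (q - p)}

/-- `Â(p,q)`: the points within distance `(ε/64)·‖q-p‖` of `A(p,q)`. -/
def Ahat (ε : ℝ) (p q : EuclideanSpace ℝ (Fin 2)) : Set (EuclideanSpace ℝ (Fin 2)) :=
  {x | ∃ y ∈ Aseg ε p q, dist x y ≤ ε / 64 * ‖q - p‖}

/-- The segment `Ā(p,q)` of length `(√ε/2)·‖q-p‖` on the line `pq`, with one endpoint
at `p`, emanating away from `q`. -/
def Abar (ε : ℝ) (p q : EuclideanSpace ℝ (Fin 2)) : Set (EuclideanSpace ℝ (Fin 2)) :=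
  {x | ∃ t : ℝ, 0 ≤ t ∧ t ≤ Real.sqrt ε / 2 * ‖q - p‖ ∧
    x = p - (t / ‖q - p‖) • (q - p)}

/-- `Ã(p,q)`: the points within distance `(3ε/32)·‖q-p‖` of `Ā(p,q)`. -/
def Atilde (ε : ℝ) (p q : EuclideanSpace ℝ (Fin 2)) : Set (EuclideanSpace ℝ (Fin 2)) :=
  {x | ∃ y ∈ Abar ε p q, dist x y ≤ 3 * ε / 32 * ‖q - p‖}

/-!
Turning a ray at `p` from direction `q - p` to direction `q' - p` moves its point at distance `t`
by the chord `t‖u - u'‖ ≤ t·∠(q - p, q' - p)`, where `u`, `u'` are the unit directions; on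
`A(p,q)` this is at most `(√ε/16)‖q - p‖ · √ε/4 = (ε/64)‖q - p‖`. So `Â(p,q)` lies within
`(ε/32)‖q - p‖` of the ray at `p` in direction `p - q'`, and `‖q - p‖ ≤ 3‖q' - p‖` fits both the
length and the width into those of `Ã(p,q')`.
-/

namespace InnerProductGeometry

variable {V : Type*} [NormedAddCommGroup V] [InnerProductSpace ℝ V]

theorem norm_sub_le_angle_of_norm_eq_one {u v : V} (hu : ‖u‖ = 1) (hv : ‖v‖ = 1) :
    ‖u - v‖ ≤ angle u v := by
  have hsq : ‖u - v‖ ^ 2 = 2 - 2 * Real.cos (angle u v) := by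
    rw [sq, norm_sub_sq_eq_norm_sq_add_norm_sq_sub_two_mul_norm_mul_norm_mul_cos_angle, hu, hv]
    ring
  have hcos : 1 - angle u v ^ 2 / 2 ≤ Real.cos (angle u v) := Real.one_sub_sq_div_two_le_cos
  exact le_of_sq_le_sq (by linarith) (angle_nonneg u v)

theorem norm_inv_norm_smul_sub_le_angle {x y : V} (hx : x ≠ 0) (hy : y ≠ 0) :
    ‖‖x‖⁻¹ • x - ‖y‖⁻¹ • y‖ ≤ angle x y := by
  have unit {z : V} (hz : z ≠ 0) : ‖‖z‖⁻¹ • z‖ = 1 := by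
    rw [norm_smul, norm_inv, norm_norm, inv_mul_cancel₀ (norm_ne_zero_iff.2 hz)]
  have h := norm_sub_le_angle_of_norm_eq_one (unit hx) (unit hy)
  rwa [angle_smul_left_of_pos _ _ (inv_pos.2 (norm_pos_iff.2 hx)),
    angle_smul_right_of_pos _ _ (inv_pos.2 (norm_pos_iff.2 hy))] at h

theorem dist_sub_div_norm_smul_le_mul_angle (p : V) {x y : V} (hx : x ≠ 0) (hy : y ≠ 0)
    {t : ℝ} (ht : 0 ≤ t) :
    dist (p - (t / ‖x‖) • x) (p - (t / ‖y‖) • y) ≤ t * angle x y := by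
  rw [dist_sub_left, dist_eq_norm, div_eq_mul_inv, div_eq_mul_inv, mul_smul, mul_smul,
    ← smul_sub, norm_smul, Real.norm_of_nonneg ht]
  exact mul_le_mul_of_nonneg_left (norm_inv_norm_smul_sub_le_angle hx hy) ht

end InnerProductGeometry

theorem Ahat_subset_Atilde_general (ε : ℝ) (hε0 : 0 < ε)
    (p q q' : EuclideanSpace ℝ (Fin 2)) (hq : q ≠ p) (hq' : q' ≠ p)
    (hangle : InnerProductGeometry.angle (q - p) (q' - p) ≤ Real.sqrt ε / 4)
    (hlen : (1 / 3) * ‖p - q‖ ≤ ‖p - q'‖) :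
    Ahat ε p q ⊆ Atilde ε p q' := by
  have hlen' : ‖q - p‖ ≤ 3 * ‖q' - p‖ := by
    rw [norm_sub_rev q, norm_sub_rev q']; linarith
  have hsqrt : Real.sqrt ε * Real.sqrt ε = ε := Real.mul_self_sqrt hε0.le
  rintro x ⟨y, ⟨t, ht0, ht, rfl⟩, hxy⟩
  refine ⟨p - (t / ‖q' - p‖) • (q' - p), ⟨t, ht0, ?_, rfl⟩, ?_⟩
  · nlinarith [Real.sqrt_nonneg ε]
  have hturn := InnerProductGeometry.dist_sub_div_norm_smul_le_mul_angle p
    (sub_ne_zero.2 hq) (sub_ne_zero.2 hq') ht0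
  calc dist x (p - (t / ‖q' - p‖) • (q' - p))
      ≤ ε / 64 * ‖q - p‖ + t * InnerProductGeometry.angle (q - p) (q' - p) :=
        (dist_triangle _ _ _).trans (add_le_add hxy hturn)
    _ ≤ ε / 64 * ‖q - p‖ + Real.sqrt ε / 16 * ‖q - p‖ * (Real.sqrt ε / 4) := by
        gcongr
        exact InnerProductGeometry.angle_nonneg _ _
    _ = ε / 32 * ‖q - p‖ := by linear_combination ‖q - p‖ / 64 * hsqrt
    _ ≤ 3 * ε / 32 * ‖q' - p‖ := by nlinarith

/-- If the angle between `q - p` and `q' - p` is at most `√ε/4` and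
`‖p - q'‖ ≥ (1/3)·‖p - q‖`, then `Â(p,q) ⊆ Ã(p,q')`. -/
theorem Ahat_subset_Atilde (ε : ℝ) (hε0 : 0 < ε) (hε1 : ε < 1 / 9)
    (p q q' : EuclideanSpace ℝ (Fin 2)) (hq : q ≠ p) (hq' : q' ≠ p)
    (hangle : InnerProductGeometry.angle (q - p) (q' - p) ≤ Real.sqrt ε / 4)
    (hlen : (1 / 3) * ‖p - q‖ ≤ ‖p - q'‖) :
    Ahat ε p q ⊆ Atilde ε p q' :=
  Ahat_subset_Atilde_general ε hε0 p q q' hq hq' hangle hlen
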